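/- Let G = (V, E; w) be a graph with strictly positive edge weights whose matching game Γ_G admits a PMAS. Suppose distinct vertices 1, 2, 3, 4 induce a diamond: the induced subgraph on {1,2,3,4} has edge set exactly {12, 13, 23, 24, 34}. Then w_{23} ≥ w_{12} + w_{13} and w_{23} ≥ w_{24} + w_{34}. -/

import Mathlib

open Finset

/-- `M` is a matching of the induced subgraph `G[S]`, given as a finite set of
(ordered representatives of) edges with endpoints in `S`, pairwise vertex-disjoint. -/
def IsMatchingIn {V : Type*} (G : SimpleGraph V) (S : Finset V)
    (M : Finset (V × V)) : Prop :=
  (∀ p ∈ M, G.Adj p.1 p.2 ∧ p.1 ∈ S ∧ p.2 ∈ S) ∧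
  (∀ p ∈ M, ∀ q ∈ M, p ≠ q →
    p.1 ≠ q.1 ∧ p.1 ≠ q.2 ∧ p.2 ≠ q.1 ∧ p.2 ≠ q.2)

/-- `r` is the maximum total weight of a matching in the induced subgraph `G[S]`. -/
def IsMaxMatchingWeight {V : Type*} (G : SimpleGraph V)
    (w : V → V → ℝ) (S : Finset V) (r : ℝ) : Prop :=
  (∃ M : Finset (V × V), IsMatchingIn G S M ∧ ∑ p ∈ M, w p.1 p.2 = r) ∧
  (∀ M : Finset (V × V), IsMatchingIn G S M → ∑ p ∈ M, w p.1 p.2 ≤ r)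

/-- A population monotonic allocation scheme (PMAS): `x S i` is the payoff of player `i`
in coalition `S`.  Efficiency holds for every nonempty coalition, and every player's
payoff is monotone under coalition inclusion. -/
def IsPMAS {N : Type*} [DecidableEq N] (γ : Finset N → ℝ)
    (x : Finset N → N → ℝ) : Prop :=
  (∀ S : Finset N, S.Nonempty → ∑ i ∈ S, x S i = γ S) ∧
  (∀ S T : Finset N, S ⊆ T → ∀ i ∈ S, x S i ≤ x T i)

/-!
On at most three vertices a matching has at most one edge, so a triangle or a path on three
vertices is worth its heaviest edge. When a 3-coalition is worth no more than one of its pairs,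
the third player gets nothing there, hence nothing in any pair with it, where its partner then
takes the whole edge.

In the diamond, suppose `3` gets nothing in `{1, 2, 3}`. Whoever gets nothing in `{2, 3, 4}`
yields a contradiction: if it is `4`, then `2` and `3` take `w₂₃` and `w₃₄` inside
`{2, 3, 4}`, worth only `w₂₃`; if it is `3`, then `1` and `4` take `w₁₃` and `w₃₄` inside the
path `{1, 3, 4}`; if it is `2`, neither `2` nor `3` gets anything in `{2, 3}`. By the symmetry
`2 ↔ 3` it is `1` that gets nothing in `{1, 2, 3}`, so `2` and `3` take `w₁₂` and `w₁₃` inside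
a coalition worth `w₂₃`. The symmetry `1 ↔ 4` gives the second inequality.
-/

section MatchingValue

variable {V : Type*} {G : SimpleGraph V} {w : V → V → ℝ} {S : Finset V} {r : ℝ} {a b c : V}

theorem IsMaxMatchingWeight.weight_le (h : IsMaxMatchingWeight G w S r) (hab : G.Adj a b)
    (ha : a ∈ S) (hb : b ∈ S) : w a b ≤ r := by
  simpa using h.2 {(a, b)} ⟨by simp [hab, ha, hb], by simp⟩

variable [DecidableEq V]

theorem IsMatchingIn.two_mul_card_le {M : Finset (V × V)} (hM : IsMatchingIn G S M) :
    2 * #M ≤ #S := by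
  have hdisj : (M : Set (V × V)).PairwiseDisjoint fun p => ({p.1, p.2} : Finset V) :=
    fun p hp q hq hpq => by
      obtain ⟨h11, h12, h21, h22⟩ := hM.2 p hp q hq hpq
      simp [h11.symm, h12.symm, h21.symm, h22.symm]
  calc 2 * #M = ∑ p ∈ M, #({p.1, p.2} : Finset V) := by
        rw [sum_congr rfl fun p hp => card_pair (hM.1 p hp).1.ne, sum_const, smul_eq_mul,
          mul_comm]
    _ = #(M.biUnion fun p => {p.1, p.2}) := (card_biUnion hdisj).symm
    _ ≤ #S := card_le_card <| biUnion_subset.2 fun p hp => by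
        simp [insert_subset_iff, (hM.1 p hp).2]

theorem IsMaxMatchingWeight.eq_zero_or_exists_of_card_le_three (h : IsMaxMatchingWeight G w S r)
    (hS : #S ≤ 3) :
    r = 0 ∨ ∃ p : V × V, G.Adj p.1 p.2 ∧ p.1 ∈ S ∧ p.2 ∈ S ∧ r = w p.1 p.2 := by
  obtain ⟨⟨M, hM, rfl⟩, -⟩ := h
  have hcard : #M ≤ 1 := by have := hM.two_mul_card_le; omega
  rcases M.eq_empty_or_nonempty with rfl | ⟨p, hp⟩
  · simp
  · have hMp : M = {p} :=
      eq_singleton_iff_unique_mem.2 ⟨hp, fun q hq => card_le_one.1 hcard q hq p hp⟩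
    subst hMp
    exact Or.inr ⟨p, (hM.1 p hp).1, (hM.1 p hp).2.1, (hM.1 p hp).2.2, sum_singleton _ _⟩

theorem IsMaxMatchingWeight.eq_zero_of_singleton (h : IsMaxMatchingWeight G w {a} r) : r = 0 := by
  rcases h.eq_zero_or_exists_of_card_le_three (by simp) with hr | ⟨p, hp, h1, h2, -⟩
  · exact hr
  · simp only [mem_singleton] at h1 h2
    exact absurd (h1.trans h2.symm) hp.ne

theorem IsMaxMatchingWeight.eq_weight_of_pair (hsym : ∀ a b, w a b = w b a)
    (hpos : ∀ a b, G.Adj a b → 0 < w a b) (hab : G.Adj a b)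
    (h : IsMaxMatchingWeight G w {a, b} r) : r = w a b := by
  rcases h.eq_zero_or_exists_of_card_le_three (card_le_two.trans (by norm_num)) with
    hr | ⟨⟨u, v⟩, huv, hu, hv, rfl⟩
  · have := h.weight_le hab (by simp) (by simp)
    linarith [hpos a b hab]
  · simp only [mem_insert, mem_singleton] at hu hv
    rcases hu with rfl | rfl <;> rcases hv with rfl | rfl
    all_goals first | exact absurd rfl huv.ne | rfl | exact hsym _ _

theorem IsMaxMatchingWeight.eq_weight_of_triple (hsym : ∀ a b, w a b = w b a)
    (h : IsMaxMatchingWeight G w {a, b, c} r) :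
    r = 0 ∨ (G.Adj a b ∧ r = w a b) ∨ (G.Adj a c ∧ r = w a c) ∨ (G.Adj b c ∧ r = w b c) := by
  rcases h.eq_zero_or_exists_of_card_le_three card_le_three with
    hr | ⟨⟨u, v⟩, huv, hu, hv, rfl⟩
  · exact Or.inl hr
  · simp only [mem_insert, mem_singleton] at hu hv
    dsimp only at huv ⊢
    rcases hu with rfl | rfl | rfl <;> rcases hv with rfl | rfl | rfl
    all_goals first
      | exact absurd rfl huv.ne
      | simp [huv]
      | simp [huv.symm, hsym u v]

end MatchingValue

section PMAS

variable {N : Type*} [DecidableEq N] {γ : Finset N → ℝ} {x : Finset N → N → ℝ}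
  {S T P : Finset N} {i j k l a b c : N}

theorem IsPMAS.singleton_le (hx : IsPMAS γ x) (hi : i ∈ S) : γ {i} ≤ x S i := by
  have h := hx.1 {i} (singleton_nonempty i)
  rw [sum_singleton] at h
  exact h ▸ hx.2 {i} S (singleton_subset_iff.2 hi) i (mem_singleton_self i)

theorem IsPMAS.sum_pair (hx : IsPMAS γ x) (hij : i ≠ j) : x {i, j} i + x {i, j} j = γ {i, j} := by
  simpa [Finset.sum_pair hij] using hx.1 {i, j} (insert_nonempty i {j})

theorem IsPMAS.le_sum (hx : IsPMAS γ x) (hT : T.Nonempty) (hTS : T ⊆ S) :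
    γ T ≤ ∑ i ∈ T, x S i :=
  (hx.1 T hT).symm.le.trans <| sum_le_sum fun i hi => hx.2 T S hTS i hi

theorem IsPMAS.sum_le (hx : IsPMAS γ x) (h0 : ∀ i, 0 ≤ γ {i}) (hT : T.Nonempty) (hTS : T ⊆ S) :
    ∑ i ∈ T, x S i ≤ γ S :=
  (sum_le_sum_of_subset_of_nonneg hTS fun i hi _ => (h0 i).trans (hx.singleton_le hi)).trans
    (hx.1 S (hT.mono hTS)).le

/-- In `S`, the players `b` and `c` already claim `γ {b, c} ≥ γ S`, which leaves nothing for
`a`; monotonicity passes this down to every coalition inside `S`. -/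
theorem IsPMAS.apply_nonpos_of_le_pair (hx : IsPMAS γ x) (h0 : ∀ i, 0 ≤ γ {i})
    (hab : a ≠ b) (hac : a ≠ c) (hbc : b ≠ c) (hS : {a, b, c} ⊆ S) (hγS : γ S ≤ γ {b, c})
    (hPS : P ⊆ S) (haP : a ∈ P) : x P a ≤ 0 := by
  have hsum := hx.sum_le h0 (insert_nonempty _ _) hS
  have hbc_le := hx.le_sum (insert_nonempty _ _) ((subset_insert a {b, c}).trans hS)
  rw [sum_insert (by simp [hab, hac]), Finset.sum_pair hbc] at hsum
  rw [Finset.sum_pair hbc] at hbc_le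
  linarith [hx.2 P S hPS a haP]

theorem IsPMAS.add_le_of_apply_nonpos (hx : IsPMAS γ x) (h0 : ∀ i, 0 ≤ γ {i}) (hij : i ≠ j)
    (hik : i ≠ k) (hjl : j ≠ l) (hikS : {i, k} ⊆ S) (hjlS : {j, l} ⊆ S)
    (hk : x {i, k} k ≤ 0) (hl : x {j, l} l ≤ 0) : γ {i, k} + γ {j, l} ≤ γ S := by
  have hiS : i ∈ S := hikS (mem_insert_self i {k})
  have hjS : j ∈ S := hjlS (mem_insert_self j {l})
  have hsum := hx.sum_le h0 (insert_nonempty i {j}) (insert_subset hiS (singleton_subset_iff.2 hjS))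
  rw [Finset.sum_pair hij] at hsum
  linarith [hx.sum_pair hik, hx.sum_pair hjl, hx.2 _ S hikS i (mem_insert_self i {k}),
    hx.2 _ S hjlS j (mem_insert_self j {l})]

end PMAS

section Diamond

variable {V : Type*} [DecidableEq V] {G : SimpleGraph V} {w : V → V → ℝ}
  {γ : Finset V → ℝ} {x : Finset V → V → ℝ} {a b c d : V}

theorem weight_add_weight_le_of_value_le (hsym : ∀ a b, w a b = w b a)
    (hpos : ∀ a b, G.Adj a b → 0 < w a b) (hγ : ∀ S, IsMaxMatchingWeight G w S (γ S))
    (hx : IsPMAS γ x) (hab : G.Adj a b) (hac : G.Adj a c) (hbc : G.Adj b c)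
    (hle : γ {a, b, c} ≤ w b c) : w a b + w a c ≤ w b c := by
  have h0 : ∀ i, 0 ≤ γ {i} := fun i => (hγ {i}).eq_zero_of_singleton.ge
  have hpair : ∀ {u v}, G.Adj u v → γ {u, v} = w u v :=
    fun huv => (hγ _).eq_weight_of_pair hsym hpos huv
  have hnull : ∀ P ⊆ {a, b, c}, a ∈ P → x P a ≤ 0 := fun P hP haP =>
    hx.apply_nonpos_of_le_pair h0 hab.ne hac.ne hbc.ne subset_rfl (by rwa [hpair hbc]) hP haP
  have h := hx.add_le_of_apply_nonpos (S := {a, b, c}) h0 hbc.ne hab.ne.symm hac.ne.symm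
    (by simp [insert_subset_iff]) (by simp [insert_subset_iff])
    (hnull _ (by simp [insert_subset_iff]) (by simp))
    (hnull _ (by simp [insert_subset_iff]) (by simp))
  rw [hpair hab.symm, hpair hac.symm, hsym b a, hsym c a] at h
  linarith

theorem pos_or_pos_of_path (hsym : ∀ a b, w a b = w b a)
    (hpos : ∀ a b, G.Adj a b → 0 < w a b) (hγ : ∀ S, IsMaxMatchingWeight G w S (γ S))
    (hx : IsPMAS γ x) (hac : G.Adj a c) (hcd : G.Adj c d) (had : ¬ G.Adj a d) (hne : a ≠ d) :
    0 < x {a, c} c ∨ 0 < x {d, c} c := by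
  have h0 : ∀ i, 0 ≤ γ {i} := fun i => (hγ {i}).eq_zero_of_singleton.ge
  have hpair : ∀ {u v}, G.Adj u v → γ {u, v} = w u v :=
    fun huv => (hγ _).eq_weight_of_pair hsym hpos huv
  by_contra! hc
  have h := hx.add_le_of_apply_nonpos (S := {a, c, d}) h0 hne hac.ne hcd.ne.symm
    (by simp [insert_subset_iff]) (by simp [insert_subset_iff]) hc.1 hc.2
  rw [hpair hac, hpair hcd.symm, hsym d c] at h
  rcases (hγ {a, c, d}).eq_weight_of_triple hsym with h' | ⟨-, h'⟩ | ⟨had', -⟩ | ⟨-, h'⟩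
  · linarith [hpos a c hac, hpos c d hcd]
  · linarith [hpos c d hcd]
  · exact had had'
  · linarith [hpos a c hac]

theorem weight_lt_value_of_diamond (hsym : ∀ a b, w a b = w b a)
    (hpos : ∀ a b, G.Adj a b → 0 < w a b) (hγ : ∀ S, IsMaxMatchingWeight G w S (γ S))
    (hx : IsPMAS γ x) (hab : G.Adj a b) (hac : G.Adj a c) (hbc : G.Adj b c)
    (hbd : G.Adj b d) (hcd : G.Adj c d) (had : ¬ G.Adj a d) (hne : a ≠ d) :
    w a b < γ {a, b, c} := by
  have h0 : ∀ i, 0 ≤ γ {i} := fun i => (hγ {i}).eq_zero_of_singleton.ge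
  have hpair : ∀ {u v}, G.Adj u v → γ {u, v} = w u v :=
    fun huv => (hγ _).eq_weight_of_pair hsym hpos huv
  by_contra! hle
  have hc : ∀ P ⊆ {a, b, c}, c ∈ P → x P c ≤ 0 := fun P hP hcP =>
    hx.apply_nonpos_of_le_pair h0 hac.ne.symm hbc.ne.symm hab.ne (by simp [insert_subset_iff])
      (by rwa [hpair hab]) hP hcP
  rcases (hγ {b, c, d}).eq_weight_of_triple hsym with hzero | ⟨-, h⟩ | ⟨-, h⟩ | ⟨-, h⟩
  · linarith [(hγ {b, c, d}).weight_le hbc (by simp) (by simp), hpos b c hbc]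
  · have hd : x {c, d} d ≤ 0 :=
      hx.apply_nonpos_of_le_pair (S := {b, c, d}) h0 hbd.ne.symm hcd.ne.symm hbc.ne
        (by simp [insert_subset_iff]) (by rw [h, hpair hbc]) (by simp) (by simp)
    have h' := hx.add_le_of_apply_nonpos (S := {b, c, d}) h0 hbc.ne hbc.ne hcd.ne
      (by simp [insert_subset_iff]) (by simp) (hc _ (by simp) (by simp)) hd
    rw [hpair hbc, hpair hcd, h] at h'
    linarith [hpos c d hcd]
  · have hc' : x {d, c} c ≤ 0 :=
      hx.apply_nonpos_of_le_pair (S := {b, c, d}) h0 hbc.ne.symm hcd.ne hbd.ne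
        (by simp [insert_subset_iff]) (by rw [h, hpair hbd]) (by simp [insert_subset_iff])
        (by simp)
    rcases pos_or_pos_of_path hsym hpos hγ hx hac hcd had hne with hc_pos | hc_pos
    · linarith [hc {a, c} (by simp [insert_subset_iff]) (by simp)]
    · linarith
  · have hb : x {b, c} b ≤ 0 :=
      hx.apply_nonpos_of_le_pair h0 hbc.ne hbd.ne hcd.ne subset_rfl (by rw [h, hpair hcd])
        (by simp [insert_subset_iff]) (by simp)
    linarith [hx.sum_pair hbc.ne, hpair hbc, hpos b c hbc, hc {b, c} (by simp) (by simp)]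

theorem weight_add_weight_le_of_diamond (hsym : ∀ a b, w a b = w b a)
    (hpos : ∀ a b, G.Adj a b → 0 < w a b) (hγ : ∀ S, IsMaxMatchingWeight G w S (γ S))
    (hx : IsPMAS γ x) (hab : G.Adj a b) (hac : G.Adj a c) (hbc : G.Adj b c)
    (hbd : G.Adj b d) (hcd : G.Adj c d) (had : ¬ G.Adj a d) (hne : a ≠ d) :
    w a b + w a c ≤ w b c := by
  rcases (hγ {a, b, c}).eq_weight_of_triple hsym with h | ⟨-, h⟩ | ⟨-, h⟩ | ⟨-, h⟩
  · linarith [(hγ {a, b, c}).weight_le hab (by simp) (by simp), hpos a b hab]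
  · exact absurd h (weight_lt_value_of_diamond hsym hpos hγ hx hab hac hbc hbd hcd had hne).ne'
  · have hlt := weight_lt_value_of_diamond hsym hpos hγ hx hac hab hbc.symm hcd hbd had hne
    rw [pair_comm c b] at hlt
    exact absurd h hlt.ne'
  · exact weight_add_weight_le_of_value_le hsym hpos hγ hx hab hac hbc h.le

end Diamond

theorem matchingGame_diamond_property_general {V : Type*} [DecidableEq V]
    (G : SimpleGraph V) (w : V → V → ℝ)
    (hsym : ∀ a b : V, w a b = w b a)
    (hpos : ∀ a b : V, G.Adj a b → 0 < w a b)
    (γ : Finset V → ℝ)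
    (hγ : ∀ S : Finset V, IsMaxMatchingWeight G w S (γ S))
    (hpmas : ∃ x : Finset V → V → ℝ, IsPMAS γ x)
    (v1 v2 v3 v4 : V)
    (hne14 : v1 ≠ v4)
    (h12 : G.Adj v1 v2) (h13 : G.Adj v1 v3) (h23 : G.Adj v2 v3)
    (h24 : G.Adj v2 v4) (h34 : G.Adj v3 v4)
    (hn14 : ¬ G.Adj v1 v4) :
    w v2 v3 ≥ w v1 v2 + w v1 v3 ∧ w v2 v3 ≥ w v2 v4 + w v3 v4 := by
  obtain ⟨x, hx⟩ := hpmas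
  refine ⟨weight_add_weight_le_of_diamond hsym hpos hγ hx h12 h13 h23 h24 h34 hn14 hne14, ?_⟩
  have h := weight_add_weight_le_of_diamond hsym hpos hγ hx h24.symm h34.symm h23 h12.symm
    h13.symm (fun h41 => hn14 h41.symm) hne14.symm
  rwa [hsym v4 v2, hsym v4 v3] at h

/-- Diamond-property (Lemma 3.5). -/
theorem matchingGame_diamond_property {V : Type*} [Fintype V] [DecidableEq V]
    (G : SimpleGraph V) (w : V → V → ℝ)
    (hsym : ∀ a b : V, w a b = w b a)
    (hpos : ∀ a b : V, G.Adj a b → 0 < w a b)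
    (γ : Finset V → ℝ)
    (hγ : ∀ S : Finset V, IsMaxMatchingWeight G w S (γ S))
    (hpmas : ∃ x : Finset V → V → ℝ, IsPMAS γ x)
    (v1 v2 v3 v4 : V)
    (hne12 : v1 ≠ v2) (hne13 : v1 ≠ v3) (hne14 : v1 ≠ v4)
    (hne23 : v2 ≠ v3) (hne24 : v2 ≠ v4) (hne34 : v3 ≠ v4)
    (h12 : G.Adj v1 v2) (h13 : G.Adj v1 v3) (h23 : G.Adj v2 v3)
    (h24 : G.Adj v2 v4) (h34 : G.Adj v3 v4)
    (hn14 : ¬ G.Adj v1 v4) :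
    w v2 v3 ≥ w v1 v2 + w v1 v3 ∧ w v2 v3 ≥ w v2 v4 + w v3 v4 :=
  matchingGame_diamond_property_general G w hsym hpos γ hγ hpmas v1 v2 v3 v4 hne14 h12 h13 h23 h24
    h34 hn14
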